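/- Let R be an integral domain and C̃ an S-complex over R. Then each J_i(C̃) is an ideal of R, and the ideals are nested: J_{i+1}(C̃) ⊆ J_i(C̃) for all i ∈ ℤ. Moreover, if there exists a morphism of S-complexes C̃ → C̃', then J_i(C̃) ⊆ J_i(C̃') for every i ∈ ℤ. -/
import Mathlib


/-!  S-complexes over a commutative ring `R` (following Daemi–Scaduto).

An S-complex is a ℤ-graded finitely generated free chain complex
`C̃ = C ⊕ C[1] ⊕ R` determined by the data of `C` together with maps
`d, v, δ₁, δ₂`.  We encode the graded module `C` by a single module `Tot`
together with an internal ℤ-grading by submodules, and we carry the sign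
map `ε` (multiplication by `(-1)^i` on the degree `i` part) as data. -/

universe u

/-- The data of an S-complex over `R`: a module `Tot` (the total module of the
ℤ-graded module `C_*`), its grading, the sign map `ε`, and the structure maps
`d : C_* → C_{*-1}`, `v : C_* → C_{*-2}`, `δ₁ : C_* → R` (supported in degree 1),
`δ₂ : R → C_{-2}`. -/
structure SComplexData (R : Type u) [CommRing R] where
  Tot : Type u
  [acg : AddCommGroup Tot]
  [mod : Module R Tot]
  grading : ℤ → Submodule R Tot
  sign : Tot →ₗ[R] Tot
  d : Tot →ₗ[R] Tot
  v : Tot →ₗ[R] Tot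
  δ₁ : Tot →ₗ[R] R
  δ₂ : R →ₗ[R] Tot

attribute [instance] SComplexData.acg SComplexData.mod

namespace SComplexData

variable {R : Type u} [CommRing R]

/-- The axioms making the data of `X : SComplexData R` into a genuine S-complex:
the grading is an internal direct sum decomposition into finitely generated free
pieces, the sign map is `(-1)^i` on the degree `i` piece, the structure maps are
graded of the appropriate degrees (`δ₁` supported on `C_1`, `δ₂` valued in `C_{-2}`),
and the S-complex relations `d∘d = 0`, `δ₁∘d = 0`, `d∘δ₂ = 0`,
`d∘v − v∘d − δ₂∘δ₁ = 0` hold; the latter are equivalent to `d̃ ∘ d̃ = 0` for the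
differential `d̃(α, β, r) = (dα, vα − dβ + δ₂ r, δ₁ α)` on `C̃ = C ⊕ C[1] ⊕ R`. -/
structure IsSComplex (X : SComplexData R) : Prop where
  internal : DirectSum.IsInternal X.grading
  free : ∀ i : ℤ, Module.Free R ↥(X.grading i)
  finite : Module.Finite R X.Tot
  sign_spec : ∀ i : ℤ, ∀ x ∈ X.grading i, X.sign x = if Even i then x else -x
  d_deg : ∀ i : ℤ, (X.grading i).map X.d ≤ X.grading (i - 1)
  v_deg : ∀ i : ℤ, (X.grading i).map X.v ≤ X.grading (i - 2)
  δ₁_deg : ∀ i : ℤ, i ≠ 1 → ∀ x ∈ X.grading i, X.δ₁ x = 0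
  δ₂_deg : LinearMap.range X.δ₂ ≤ X.grading (-2)
  d_d : X.d ∘ₗ X.d = 0
  δ₁_d : X.δ₁ ∘ₗ X.d = 0
  d_δ₂ : X.d ∘ₗ X.δ₂ = 0
  d_v : X.d ∘ₗ X.v - X.v ∘ₗ X.d - X.δ₂ ∘ₗ X.δ₁ = 0

/-- A morphism of S-complexes `λ̃ : C̃ → C̃'`, i.e. a degree-0 chain map
`λ̃(α, β, r) = (λ α, μ α + λ β + Δ₂ r, Δ₁ α + r)`, recorded through its
components `λ, μ, Δ₁, Δ₂` (here `l` stands for `λ`). -/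
structure SMorphism (X Y : SComplexData R) where
  l : X.Tot →ₗ[R] Y.Tot
  μ : X.Tot →ₗ[R] Y.Tot
  Δ₁ : X.Tot →ₗ[R] R
  Δ₂ : R →ₗ[R] Y.Tot
  l_deg : ∀ i : ℤ, (X.grading i).map l ≤ Y.grading i
  μ_deg : ∀ i : ℤ, (X.grading i).map μ ≤ Y.grading (i - 1)
  Δ₁_deg : ∀ i : ℤ, i ≠ 0 → ∀ x ∈ X.grading i, Δ₁ x = 0
  Δ₂_deg : LinearMap.range Δ₂ ≤ Y.grading (-1)
  comm_d : l ∘ₗ X.d = Y.d ∘ₗ l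
  comm_δ₁ : Δ₁ ∘ₗ X.d + X.δ₁ = Y.δ₁ ∘ₗ l
  comm_δ₂ : Y.d ∘ₗ Δ₂ + l ∘ₗ X.δ₂ = Y.δ₂
  comm_v : μ ∘ₗ X.d + Y.d ∘ₗ μ + l ∘ₗ X.v - Y.v ∘ₗ l + Δ₂ ∘ₗ X.δ₁ - Y.δ₂ ∘ₗ Δ₁ = 0

end SComplexData

/-- Functions `ℕ → M` with finitely many nonzero values (i.e. support bounded
above); this realizes the polynomial module `M[x]`. -/
def NatBdd (R : Type u) [CommRing R] (M : Type u) [AddCommGroup M] [Module R M] :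
    Submodule R (ℕ → M) where
  carrier := {f | ∃ N : ℕ, ∀ n : ℕ, N < n → f n = 0}
  add_mem' := by
    rintro f g ⟨N, hN⟩ ⟨K, hK⟩
    refine ⟨max N K, fun n hn => ?_⟩
    have h1 := hN n (lt_of_le_of_lt (le_max_left N K) hn)
    have h2 := hK n (lt_of_le_of_lt (le_max_right N K) hn)
    show f n + g n = 0
    rw [h1, h2, add_zero]
  zero_mem' := ⟨0, fun _ _ => rfl⟩
  smul_mem' := by
    rintro c f ⟨N, hN⟩
    refine ⟨N, fun n hn => ?_⟩
    show c • f n = 0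
    rw [hN n hn, smul_zero]

/-- Functions `ℤ → M` with support bounded above; for `M = R` this realizes the
ring `R[[x⁻¹, x]]` of Laurent series with finitely many positive powers of `x`. -/
def IntBdd (R : Type u) [CommRing R] (M : Type u) [AddCommGroup M] [Module R M] :
    Submodule R (ℤ → M) where
  carrier := {f | ∃ N : ℤ, ∀ n : ℤ, N < n → f n = 0}
  add_mem' := by
    rintro f g ⟨N, hN⟩ ⟨K, hK⟩
    refine ⟨max N K, fun n hn => ?_⟩
    have h1 := hN n (lt_of_le_of_lt (le_max_left N K) hn)
    have h2 := hK n (lt_of_le_of_lt (le_max_right N K) hn)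
    show f n + g n = 0
    rw [h1, h2, add_zero]
  zero_mem' := ⟨0, fun _ _ => rfl⟩
  smul_mem' := by
    rintro c f ⟨N, hN⟩
    refine ⟨N, fun n hn => ?_⟩
    show c • f n = 0
    rw [hN n hn, smul_zero]

/-- The multiplication of `R[[x⁻¹, x]]`, realized as a convolution product on
functions `ℤ → R` with support bounded above. -/
noncomputable def lmul {R : Type u} [CommRing R] (f g : ↥(IntBdd R R)) : ↥(IntBdd R R) :=
  ⟨fun n => ∑ᶠ i : ℤ, f.1 i * g.1 (n - i), by
    obtain ⟨N, hN⟩ := f.2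
    obtain ⟨K, hK⟩ := g.2
    refine ⟨N + K, fun n hn => ?_⟩
    apply finsum_eq_zero_of_forall_eq_zero
    intro i
    by_cases h : N < i
    · rw [hN i h, zero_mul]
    · rw [hK (n - i) (by omega), mul_zero]⟩

namespace SComplexData

variable {R : Type u} [CommRing R]

/-- The carrier of the small equivariant complex `𝔣Ĉ_* = C_{*-1} ⊕ R[x]`,
with `R[x]` realized as finitely supported functions `ℕ → R`. -/
abbrev Small (X : SComplexData R) : Type u := X.Tot × ↥(NatBdd R R)

/-- `Σᵢ vⁱ δ₂(aᵢ)` for a polynomial with coefficients `aᵢ`. -/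
noncomputable def sumV (X : SComplexData R) (f : ↥(NatBdd R R)) : X.Tot :=
  ∑ᶠ i : ℕ, (X.v ^ i) (X.δ₂ (f.1 i))

/-- The differential `𝔡̂(α, Σᵢ aᵢxⁱ) = (dα − Σᵢ vⁱδ₂(aᵢ), 0)` of the small
equivariant complex. -/
noncomputable def smallD (X : SComplexData R) : X.Small → X.Small :=
  fun z => (X.d z.1 - X.sumV z.2, 0)

/-- The `R[x]`-module structure of the small equivariant complex:
`x · (α, p(x)) = (v(α), δ₁(α) + x·p(x))`; this is the action of `x`. -/
noncomputable def xSmall (X : SComplexData R) : X.Small → X.Small :=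
  fun z => (X.v z.1, ⟨fun n => if n = 0 then X.δ₁ z.1 else z.2.1 (n - 1), by
    obtain ⟨N, hN⟩ := z.2.2
    refine ⟨N + 1, fun n hn => ?_⟩
    show (if n = 0 then X.δ₁ z.1 else z.2.1 (n - 1)) = 0
    rw [if_neg (by omega)]
    exact hN (n - 1) (by omega)⟩)

/-- The map `𝔦 : 𝔣Ĉ_* → R[[x⁻¹, x]]`,
`𝔦(α, Σᵢ aᵢxⁱ) = Σ_{i ≤ −1} δ₁v^{−i−1}(α) xⁱ + Σᵢ aᵢxⁱ`. -/
noncomputable def iota (X : SComplexData R) : X.Small → ↥(IntBdd R R) :=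
  fun z => ⟨fun n => if n < 0 then X.δ₁ ((X.v ^ (-n - 1).toNat) z.1) else z.2.1 n.toNat, by
    obtain ⟨N, hN⟩ := z.2.2
    refine ⟨(N : ℤ), fun n hn => ?_⟩
    show (if n < 0 then X.δ₁ ((X.v ^ (-n - 1).toNat) z.1) else z.2.1 n.toNat) = 0
    rw [if_neg (by omega)]
    exact hN n.toNat (by omega)⟩

/-- `𝔍(C̃) = 𝔦(ker 𝔡̂)`, an `R[x]`-submodule of `R[[x⁻¹, x]]`, here recorded
as a set. -/
noncomputable def JJ (X : SComplexData R) : Set ↥(IntBdd R R) :=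
  X.iota '' {z | X.smallD z = 0}

/-- `DegEq Q n` means that the Laurent series `Q` is nonzero with `Deg Q = n`,
i.e. `n` is the largest exponent with nonzero coefficient. -/
def DegEq {R : Type u} [CommRing R] (Q : ↥(IntBdd R R)) (n : ℤ) : Prop :=
  Q.1 n ≠ 0 ∧ ∀ m : ℤ, n < m → Q.1 m = 0

/-- The set of degrees of nonzero elements of `𝔍(C̃)`. -/
noncomputable def degSet (X : SComplexData R) : Set ℤ :=
  {n : ℤ | ∃ Q ∈ X.JJ, DegEq Q n}

/-- The Frøyshov invariant `h(C̃) = −inf {Deg Q : 0 ≠ Q ∈ 𝔍(C̃)}`. -/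
noncomputable def hInv (X : SComplexData R) : ℤ := -sInf X.degSet

/-- The ideal `J_i(C̃) = {a ∈ R : ∃ Q = a·x^{−i} + (lower order terms) ∈ 𝔍(C̃)}`,
recorded as a set. -/
noncomputable def Jideal (X : SComplexData R) (i : ℤ) : Set R :=
  {a : R | ∃ Q ∈ X.JJ, (∀ m : ℤ, -i < m → Q.1 m = 0) ∧ Q.1 (-i) = a}

end SComplexData

/-! ### Auxiliary lemmas for the proof of Statement 11. -/

namespace SComplexData

variable {R : Type u} [CommRing R] {X : SComplexData R}

private lemma pow_apply_succ {M : Type u} [AddCommGroup M] [Module R M]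
    (f : M →ₗ[R] M) (n : ℕ) (x : M) : (f ^ (n + 1)) x = (f ^ n) (f x) := by
  rw [pow_succ, Module.End.mul_apply]

private lemma pow_apply_succ' {M : Type u} [AddCommGroup M] [Module R M]
    (f : M →ₗ[R] M) (n : ℕ) (x : M) : (f ^ (n + 1)) x = f ((f ^ n) x) := by
  rw [pow_succ', Module.End.mul_apply]

lemma pow_v_mem (hX : X.IsSComplex) (k : ℕ) {i : ℤ} {x : X.Tot}
    (hx : x ∈ X.grading i) : (X.v ^ k) x ∈ X.grading (i - 2 * k) := by
  induction k with
  | zero => simpa using hx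
  | succ n ih =>
    have h2 : X.v ((X.v ^ n) x) ∈ X.grading (i - 2 * n - 2) :=
      hX.v_deg _ ⟨_, ih, rfl⟩
    rw [pow_apply_succ']
    convert h2 using 2
    push_cast
    ring

lemma δ₁_pow_v_δ₂ (hX : X.IsSComplex) (k : ℕ) (r : R) :
    X.δ₁ ((X.v ^ k) (X.δ₂ r)) = 0 := by
  have h1 : X.δ₂ r ∈ X.grading (-2) := hX.δ₂_deg ⟨r, rfl⟩
  exact hX.δ₁_deg _ (by omega) _ (pow_v_mem hX k h1)

lemma d_v_apply (hX : X.IsSComplex) (x : X.Tot) :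
    X.d (X.v x) = X.v (X.d x) + X.δ₂ (X.δ₁ x) := by
  have h := LinearMap.congr_fun hX.d_v x
  simp only [LinearMap.sub_apply, LinearMap.comp_apply, LinearMap.zero_apply, sub_sub] at h
  rw [sub_eq_zero] at h
  exact h

lemma d_pow_v_δ₂ (hX : X.IsSComplex) (k : ℕ) (r : R) :
    X.d ((X.v ^ k) (X.δ₂ r)) = 0 := by
  induction k with
  | zero => simpa using LinearMap.congr_fun hX.d_δ₂ r
  | succ n ih =>
    rw [pow_apply_succ', d_v_apply hX, ih, map_zero, δ₁_pow_v_δ₂ hX, map_zero, add_zero]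

lemma δ₁_pow_v_d (hX : X.IsSComplex) (k : ℕ) (x : X.Tot) :
    X.δ₁ ((X.v ^ k) (X.d x)) = 0 := by
  induction k generalizing x with
  | zero => simpa using LinearMap.congr_fun hX.δ₁_d x
  | succ n ih =>
    have hv : X.v (X.d x) = X.d (X.v x) - X.δ₂ (X.δ₁ x) := by
      rw [d_v_apply hX]; abel
    rw [pow_apply_succ, hv, map_sub, map_sub, ih (X.v x), δ₁_pow_v_δ₂ hX, sub_zero]

lemma sumV_eq_sum (f : ↥(NatBdd R R)) {N : ℕ} (hN : ∀ n, N < n → f.1 n = 0) :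
    X.sumV f = ∑ n ∈ Finset.range (N + 1), (X.v ^ n) (X.δ₂ (f.1 n)) := by
  apply finsum_eq_sum_of_support_subset
  intro n hn
  simp only [Function.mem_support] at hn
  simp only [Finset.coe_range, Set.mem_Iio]
  by_contra h
  exact hn (by rw [hN n (by omega), map_zero, map_zero])

lemma sumV_zero : X.sumV 0 = 0 := by
  have : X.sumV 0 = ∑ n ∈ Finset.range 1, (X.v ^ n) (X.δ₂ ((0 : ↥(NatBdd R R)).1 n)) :=
    sumV_eq_sum 0 (fun n _ => rfl)
  simp only [this]
  apply Finset.sum_eq_zero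
  intro n _
  show (X.v ^ n) (X.δ₂ (0 : R)) = 0
  rw [map_zero, map_zero]

lemma sumV_add (f g : ↥(NatBdd R R)) : X.sumV (f + g) = X.sumV f + X.sumV g := by
  obtain ⟨N₁, h₁⟩ := f.2
  obtain ⟨N₂, h₂⟩ := g.2
  have hf : ∀ n, max N₁ N₂ < n → f.1 n = 0 := fun n hn => h₁ n (by omega)
  have hg : ∀ n, max N₁ N₂ < n → g.1 n = 0 := fun n hn => h₂ n (by omega)
  have hfg : ∀ n, max N₁ N₂ < n → (f + g).1 n = 0 := by
    intro n hn
    show f.1 n + g.1 n = 0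
    rw [hf n hn, hg n hn, add_zero]
  rw [sumV_eq_sum f hf, sumV_eq_sum g hg, sumV_eq_sum (f + g) hfg,
    ← Finset.sum_add_distrib]
  apply Finset.sum_congr rfl
  intro n _
  show (X.v ^ n) (X.δ₂ (f.1 n + g.1 n)) = _
  rw [map_add, map_add]

lemma sumV_smul (c : R) (f : ↥(NatBdd R R)) : X.sumV (c • f) = c • X.sumV f := by
  obtain ⟨N, hN⟩ := f.2
  have hcf : ∀ n, N < n → (c • f).1 n = 0 := by
    intro n hn
    show c • f.1 n = 0
    rw [hN n hn, smul_zero]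
  rw [sumV_eq_sum f hN, sumV_eq_sum (c • f) hcf, Finset.smul_sum]
  apply Finset.sum_congr rfl
  intro n _
  show (X.v ^ n) (X.δ₂ (c • f.1 n)) = _
  rw [map_smul, map_smul]

lemma smallD_eq_zero_iff (z : X.Small) :
    X.smallD z = 0 ↔ X.d z.1 = X.sumV z.2 := by
  constructor
  · intro h
    have h1 : X.d z.1 - X.sumV z.2 = 0 := congrArg Prod.fst h
    rw [sub_eq_zero] at h1
    exact h1
  · intro h
    show (X.d z.1 - X.sumV z.2, (0 : ↥(NatBdd R R))) = 0
    rw [h, sub_self]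
    rfl

lemma iota_neg_apply (z : X.Small) {m : ℤ} (hm : m < 0) :
    (X.iota z).1 m = X.δ₁ ((X.v ^ (-m - 1).toNat) z.1) := if_pos hm

lemma iota_nonneg_apply (z : X.Small) {m : ℤ} (hm : ¬ m < 0) :
    (X.iota z).1 m = z.2.1 m.toNat := if_neg hm

lemma iota_add_apply (z w : X.Small) (m : ℤ) :
    (X.iota (z + w)).1 m = (X.iota z).1 m + (X.iota w).1 m := by
  by_cases hm : m < 0
  · rw [iota_neg_apply _ hm, iota_neg_apply _ hm, iota_neg_apply _ hm]
    show X.δ₁ ((X.v ^ (-m - 1).toNat) (z.1 + w.1)) = _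
    rw [map_add, map_add]
  · rw [iota_nonneg_apply _ hm, iota_nonneg_apply _ hm, iota_nonneg_apply _ hm]
    rfl

lemma iota_smul_apply (c : R) (z : X.Small) (m : ℤ) :
    (X.iota (c • z)).1 m = c * (X.iota z).1 m := by
  by_cases hm : m < 0
  · rw [iota_neg_apply _ hm, iota_neg_apply _ hm]
    show X.δ₁ ((X.v ^ (-m - 1).toNat) (c • z.1)) = _
    rw [map_smul, map_smul, smul_eq_mul]
  · rw [iota_nonneg_apply _ hm, iota_nonneg_apply _ hm]
    rfl

lemma iota_zero_apply (m : ℤ) : (X.iota 0).1 m = 0 := by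
  by_cases hm : m < 0
  · rw [iota_neg_apply _ hm]
    show X.δ₁ ((X.v ^ (-m - 1).toNat) (0 : X.Tot)) = 0
    rw [map_zero, map_zero]
  · rw [iota_nonneg_apply _ hm]
    rfl

lemma smallD_zero : X.smallD 0 = 0 := by
  rw [smallD_eq_zero_iff]
  show X.d 0 = X.sumV 0
  rw [map_zero, sumV_zero]

lemma smallD_add_eq_zero {z w : X.Small} (hz : X.smallD z = 0) (hw : X.smallD w = 0) :
    X.smallD (z + w) = 0 := by
  rw [smallD_eq_zero_iff] at hz hw ⊢
  show X.d (z.1 + w.1) = X.sumV (z.2 + w.2)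
  rw [map_add, hz, hw, sumV_add]

lemma smallD_smul_eq_zero (c : R) {z : X.Small} (hz : X.smallD z = 0) :
    X.smallD (c • z) = 0 := by
  rw [smallD_eq_zero_iff] at hz ⊢
  show X.d (c • z.1) = X.sumV (c • z.2)
  rw [map_smul, hz, sumV_smul]

/-! #### The `x`-action lemmas -/

lemma xSmall_snd_apply (z : X.Small) (n : ℕ) :
    (X.xSmall z).2.1 n = if n = 0 then X.δ₁ z.1 else z.2.1 (n - 1) := rfl

lemma sumV_xSmall (z : X.Small) :
    X.sumV (X.xSmall z).2 = X.δ₂ (X.δ₁ z.1) + X.v (X.sumV z.2) := by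
  obtain ⟨N, hN⟩ := z.2.2
  have hb : ∀ n, N + 1 < n → (X.xSmall z).2.1 n = 0 := by
    intro n hn
    rw [xSmall_snd_apply, if_neg (by omega)]
    exact hN _ (by omega)
  rw [sumV_eq_sum _ hb, sumV_eq_sum z.2 hN, Finset.sum_range_succ']
  have h0 : (X.v ^ 0) (X.δ₂ ((X.xSmall z).2.1 0)) = X.δ₂ (X.δ₁ z.1) := by
    rw [xSmall_snd_apply]
    simp
  rw [h0, add_comm]
  congr 1
  rw [map_sum]
  apply Finset.sum_congr rfl
  intro n _
  rw [xSmall_snd_apply, if_neg (Nat.succ_ne_zero n), Nat.add_sub_cancel, pow_apply_succ']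

lemma smallD_xSmall {z : X.Small} (hX : X.IsSComplex) (hz : X.smallD z = 0) :
    X.smallD (X.xSmall z) = 0 := by
  rw [smallD_eq_zero_iff] at hz ⊢
  show X.d (X.v z.1) = X.sumV (X.xSmall z).2
  rw [sumV_xSmall, d_v_apply hX, hz, add_comm]

lemma iota_xSmall_apply (z : X.Small) (m : ℤ) :
    (X.iota (X.xSmall z)).1 m = (X.iota z).1 (m - 1) := by
  rcases lt_trichotomy m 0 with hm | hm | hm
  · rw [iota_neg_apply _ hm, iota_neg_apply _ (by omega : m - 1 < 0)]
    show X.δ₁ ((X.v ^ (-m - 1).toNat) (X.v z.1)) = _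
    have hk : (-(m - 1) - 1).toNat = (-m - 1).toNat + 1 := by omega
    rw [hk, pow_apply_succ]
  · subst hm
    rw [iota_nonneg_apply _ (by norm_num : ¬ (0 : ℤ) < 0),
      iota_neg_apply _ (by norm_num : (0 : ℤ) - 1 < 0)]
    show (if (0 : ℤ).toNat = 0 then X.δ₁ z.1 else z.2.1 ((0 : ℤ).toNat - 1)) = _
    have h1 : (-(((0 : ℤ)) - 1) - 1).toNat = 0 := by omega
    rw [h1]
    simp
  · have hm1 : ¬ m < 0 := by omega
    have hm2 : ¬ m - 1 < 0 := by omega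
    have hm3 : ¬ m.toNat = 0 := by omega
    have hm4 : m.toNat - 1 = (m - 1).toNat := by omega
    rw [iota_nonneg_apply _ hm1, iota_nonneg_apply _ hm2, xSmall_snd_apply,
      if_neg hm3, hm4]

/-! #### Morphism lemmas -/

variable {B : SComplexData R}

lemma comm_d_apply (f : SMorphism X B) (x : X.Tot) :
    f.l (X.d x) = B.d (f.l x) :=
  LinearMap.congr_fun f.comm_d x

lemma comm_δ₁_apply (f : SMorphism X B) (x : X.Tot) :
    f.Δ₁ (X.d x) + X.δ₁ x = B.δ₁ (f.l x) :=
  LinearMap.congr_fun f.comm_δ₁ x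

lemma comm_δ₂_apply (f : SMorphism X B) (r : R) :
    B.d (f.Δ₂ r) + f.l (X.δ₂ r) = B.δ₂ r :=
  LinearMap.congr_fun f.comm_δ₂ r

lemma comm_v_apply (f : SMorphism X B) (x : X.Tot) :
    f.μ (X.d x) + B.d (f.μ x) + f.l (X.v x) - B.v (f.l x)
      + f.Δ₂ (X.δ₁ x) - B.δ₂ (f.Δ₁ x) = 0 := by
  have h := LinearMap.congr_fun f.comm_v x
  simpa using h

lemma Δ₁_pow_v_δ₂ (hX : X.IsSComplex) (f : SMorphism X B) (k : ℕ) (r : R) :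
    f.Δ₁ ((X.v ^ k) (X.δ₂ r)) = 0 := by
  have h1 : X.δ₂ r ∈ X.grading (-2) := hX.δ₂_deg ⟨r, rfl⟩
  exact f.Δ₁_deg _ (by omega) _ (pow_v_mem hX k h1)

lemma δ₁_pow_v_Δ₂ (hB : B.IsSComplex) (f : SMorphism X B) (k : ℕ) (r : R) :
    B.δ₁ ((B.v ^ k) (f.Δ₂ r)) = 0 := by
  have h1 : f.Δ₂ r ∈ B.grading (-1) := f.Δ₂_deg ⟨r, rfl⟩
  exact hB.δ₁_deg _ (by omega) _ (pow_v_mem hB k h1)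

lemma δ₁_pow_v_μ_pow_v_δ₂ (hX : X.IsSComplex) (hB : B.IsSComplex)
    (f : SMorphism X B) (k m : ℕ) (r : R) :
    B.δ₁ ((B.v ^ k) (f.μ ((X.v ^ m) (X.δ₂ r)))) = 0 := by
  have h1 : X.δ₂ r ∈ X.grading (-2) := hX.δ₂_deg ⟨r, rfl⟩
  have h2 := pow_v_mem hX m h1
  have h3 : f.μ ((X.v ^ m) (X.δ₂ r)) ∈ B.grading (-2 - 2 * m - 1) :=
    f.μ_deg _ ⟨_, h2, rfl⟩
  exact hB.δ₁_deg _ (by omega) _ (pow_v_mem hB k h3)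

/-- The key degree-matching claim: for a cycle `α` whose lower `δ₁ vʲ` values
vanish, `δ₁' v'ᵏ (λ α) = δ₁ vᵏ α`. -/
lemma claim_coeff (hX : X.IsSComplex) (hB : B.IsSComplex) (f : SMorphism X B)
    (k : ℕ) (α : X.Tot) (hd : X.d α = 0)
    (h : ∀ j : ℕ, j < k → X.δ₁ ((X.v ^ j) α) = 0) :
    B.δ₁ ((B.v ^ k) (f.l α)) = X.δ₁ ((X.v ^ k) α) := by
  induction k generalizing α with
  | zero =>
    have h1 := comm_δ₁_apply f α
    rw [hd, map_zero, zero_add] at h1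
    simpa using h1.symm
  | succ n ih =>
    have hδ₁α : X.δ₁ α = 0 := h 0 (Nat.succ_pos n)
    have hv : B.v (f.l α) = f.l (X.v α) + B.d (f.μ α) - B.δ₂ (f.Δ₁ α) := by
      have h1 := comm_v_apply f α
      rw [hd, hδ₁α, map_zero, map_zero] at h1
      have := sub_eq_zero.mpr h1.symm
      -- h1 : 0 + d'(μ α) + l(v α) - v'(l α) + 0 - δ₂'(Δ₁ α) = 0
      linear_combination (norm := abel) -h1
    have hd' : X.d (X.v α) = 0 := by
      rw [d_v_apply hX, hd, hδ₁α, map_zero, map_zero, add_zero]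
    have h' : ∀ j : ℕ, j < n → X.δ₁ ((X.v ^ j) (X.v α)) = 0 := by
      intro j hj
      rw [← pow_apply_succ]
      exact h (j + 1) (by omega)
    rw [pow_apply_succ, hv]
    simp only [map_add, map_sub]
    rw [δ₁_pow_v_d hB, δ₁_pow_v_δ₂ hB, add_zero, sub_zero, ih (X.v α) hd' h',
      ← pow_apply_succ]

/-- The chain-map identity for the corrected lift of `vⁿ δ₂`. -/
lemma star_identity (hX : X.IsSComplex) (hB : B.IsSComplex) (f : SMorphism X B)
    (n : ℕ) (r : R) :
    f.l ((X.v ^ n) (X.δ₂ r)) + B.d ((B.v ^ n) (f.Δ₂ r))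
      + ∑ j ∈ Finset.range n, B.d ((B.v ^ j) (f.μ ((X.v ^ (n - 1 - j)) (X.δ₂ r))))
    = (B.v ^ n) (B.δ₂ r) := by
  induction n with
  | zero =>
    simp only [pow_zero, Module.End.one_apply, Finset.range_zero, Finset.sum_empty, add_zero]
    rw [add_comm]
    exact comm_δ₂_apply f r
  | succ n ih =>
    set y : X.Tot := (X.v ^ n) (X.δ₂ r) with hy
    -- term 1
    have t1 : f.l ((X.v ^ (n + 1)) (X.δ₂ r)) = B.v (f.l y) - B.d (f.μ y) := by
      rw [pow_apply_succ' X.v]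
      have h1 := comm_v_apply f y
      rw [d_pow_v_δ₂ hX, δ₁_pow_v_δ₂ hX, Δ₁_pow_v_δ₂ hX, map_zero, map_zero, map_zero] at h1
      linear_combination (norm := abel) h1
    -- term 2
    have t2 : B.d ((B.v ^ (n + 1)) (f.Δ₂ r)) = B.v (B.d ((B.v ^ n) (f.Δ₂ r))) := by
      rw [pow_apply_succ' B.v, d_v_apply hB, δ₁_pow_v_Δ₂ hB, map_zero, add_zero]
    -- term 3
    have t3 : ∑ j ∈ Finset.range (n + 1),
        B.d ((B.v ^ j) (f.μ ((X.v ^ (n + 1 - 1 - j)) (X.δ₂ r))))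
        = B.d (f.μ y)
          + B.v (∑ j ∈ Finset.range n,
              B.d ((B.v ^ j) (f.μ ((X.v ^ (n - 1 - j)) (X.δ₂ r))))) := by
      rw [Finset.sum_range_succ']
      have h0 : B.d ((B.v ^ 0) (f.μ ((X.v ^ (n + 1 - 1 - 0)) (X.δ₂ r)))) = B.d (f.μ y) := by
        simp [hy]
      rw [h0, add_comm]
      congr 1
      rw [map_sum]
      apply Finset.sum_congr rfl
      intro j _
      have he : n + 1 - 1 - (j + 1) = n - 1 - j := by omega
      rw [he, pow_apply_succ' B.v, d_v_apply hB, δ₁_pow_v_μ_pow_v_δ₂ hX hB,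
        map_zero, add_zero]
    rw [t1, t2, t3, pow_apply_succ' B.v, ← ih]
    rw [map_add, map_add]
    abel

end SComplexData

open SComplexData in
/-- **Statement 11.** Each `J_i(C̃)` is an ideal of `R`; the ideals are nested,
`J_{i+1}(C̃) ⊆ J_i(C̃)`; and a morphism of S-complexes `C̃ → C̃'` gives
`J_i(C̃) ⊆ J_i(C̃')` for every `i`. -/
theorem statement11 {R : Type u} [CommRing R] [IsDomain R]
    (A : SComplexData R) (hA : A.IsSComplex) :
    (∀ i : ℤ, ∃ I : Ideal R, (I : Set R) = A.Jideal i) ∧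
    (∀ i : ℤ, A.Jideal (i + 1) ⊆ A.Jideal i) ∧
    (∀ B : SComplexData R, B.IsSComplex → SMorphism A B →
      ∀ i : ℤ, A.Jideal i ⊆ B.Jideal i) := by
  refine ⟨?_, ?_, ?_⟩
  · -- each `J_i` is an ideal
    intro i
    have hzero : (0 : R) ∈ A.Jideal i :=
      ⟨A.iota 0, ⟨0, smallD_zero, rfl⟩, fun m _ => iota_zero_apply m, iota_zero_apply _⟩
    have hadd : ∀ a b : R, a ∈ A.Jideal i → b ∈ A.Jideal i → a + b ∈ A.Jideal i := by
      rintro a b ⟨Q, ⟨z, hz, rfl⟩, hv, hc⟩ ⟨Q', ⟨w, hw, rfl⟩, hv', hc'⟩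
      refine ⟨A.iota (z + w), ⟨z + w, smallD_add_eq_zero hz hw, rfl⟩, ?_, ?_⟩
      · intro m hm
        rw [iota_add_apply, hv m hm, hv' m hm, add_zero]
      · rw [iota_add_apply, hc, hc']
    have hsmul : ∀ c a : R, a ∈ A.Jideal i → c • a ∈ A.Jideal i := by
      rintro c a ⟨Q, ⟨z, hz, rfl⟩, hv, hc⟩
      refine ⟨A.iota (c • z), ⟨c • z, smallD_smul_eq_zero c hz, rfl⟩, ?_, ?_⟩
      · intro m hm
        rw [iota_smul_apply, hv m hm, mul_zero]
      · rw [iota_smul_apply, hc, smul_eq_mul]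
    exact ⟨{ carrier := A.Jideal i
             zero_mem' := hzero
             add_mem' := fun ha hb => hadd _ _ ha hb
             smul_mem' := fun c {a} ha => hsmul c a ha }, rfl⟩
  · -- nestedness
    rintro i a ⟨Q, ⟨z, hz, rfl⟩, hv, hc⟩
    refine ⟨A.iota (A.xSmall z), ⟨A.xSmall z, smallD_xSmall hA hz, rfl⟩, ?_, ?_⟩
    · intro m hm
      rw [iota_xSmall_apply]
      exact hv (m - 1) (by omega)
    · rw [iota_xSmall_apply]
      have h1 : -i - 1 = -(i + 1) := by ring
      rw [h1]
      exact hc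
  · -- morphisms
    rintro B hB f i a ⟨Q, ⟨z, hz, rfl⟩, hvan, hcoef⟩
    by_cases hi : 1 ≤ i
    · -- the case `i ≥ 1`: here the polynomial part of `Q` vanishes
      have hp : ∀ n : ℕ, z.2.1 n = 0 := by
        intro n
        have h1 := hvan (n : ℤ) (by omega)
        rwa [iota_nonneg_apply _ (by omega : ¬ (n : ℤ) < 0), Int.toNat_natCast] at h1
      have hsum : A.sumV z.2 = 0 := by
        rw [sumV_eq_sum z.2 (N := 0) (fun n _ => hp n)]
        simp [hp]
      have hd0 : A.d z.1 = 0 := by rw [(smallD_eq_zero_iff z).mp hz, hsum]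
      have hkey : ∀ j : ℕ, (j : ℤ) < i - 1 → A.δ₁ ((A.v ^ j) z.1) = 0 := by
        intro j hj
        have h1 := hvan (-(j : ℤ) - 1) (by omega)
        rw [iota_neg_apply _ (by omega : -(j : ℤ) - 1 < 0)] at h1
        have h2 : (-(-(j : ℤ) - 1) - 1).toNat = j := by omega
        rwa [h2] at h1
      refine ⟨B.iota (f.l z.1, 0), ⟨(f.l z.1, 0), ?_, rfl⟩, ?_, ?_⟩
      · show B.smallD (f.l z.1, 0) = 0
        rw [smallD_eq_zero_iff]
        show B.d (f.l z.1) = B.sumV 0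
        rw [← comm_d_apply f, hd0, map_zero, sumV_zero]
      · intro m hm
        by_cases hm0 : m < 0
        · rw [iota_neg_apply _ hm0]
          rw [claim_coeff hA hB f _ _ hd0 (fun j hj => hkey j (by omega))]
          exact hkey (-m - 1).toNat (by omega)
        · rw [iota_nonneg_apply _ hm0]
          rfl
      · have hm0 : ¬ (-i < 0) → False := fun h => h (by omega)
        rw [iota_neg_apply _ (by omega : -i < 0)]
        rw [claim_coeff hA hB f _ _ hd0 (fun j hj => hkey j (by omega))]
        have h3 := hcoef
        rw [iota_neg_apply _ (by omega : -i < 0)] at h3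
        exact h3
    · -- the case `i ≤ 0`: correct `λ α` by `μ` and `Δ₂` terms
      push_neg at hi
      obtain ⟨N, hN⟩ := z.2.2
      set β : B.Tot := f.l z.1 + ∑ n ∈ Finset.range (N + 1),
        ((B.v ^ n) (f.Δ₂ (z.2.1 n)) + ∑ j ∈ Finset.range n,
          (B.v ^ j) (f.μ ((A.v ^ (n - 1 - j)) (A.δ₂ (z.2.1 n))))) with hβ
      refine ⟨B.iota (β, z.2), ⟨(β, z.2), ?_, rfl⟩, ?_, ?_⟩
      · show B.smallD (β, z.2) = 0
        rw [smallD_eq_zero_iff]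
        show B.d β = B.sumV z.2
        have hdz : A.d z.1 = A.sumV z.2 := (smallD_eq_zero_iff z).mp hz
        have hR : B.sumV z.2 = ∑ n ∈ Finset.range (N + 1), (B.v ^ n) (B.δ₂ (z.2.1 n)) :=
          sumV_eq_sum z.2 hN
        have hL : A.sumV z.2 = ∑ n ∈ Finset.range (N + 1), (A.v ^ n) (A.δ₂ (z.2.1 n)) :=
          sumV_eq_sum z.2 hN
        rw [hβ, hR, map_add, ← comm_d_apply f, hdz, hL, map_sum, map_sum,
          ← Finset.sum_add_distrib]
        apply Finset.sum_congr rfl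
        intro n _
        rw [map_add, map_sum, ← add_assoc]
        exact star_identity hA hB f n (z.2.1 n)
      · intro m hm
        have hm0 : ¬ m < 0 := by omega
        rw [iota_nonneg_apply _ hm0]
        have h1 := hvan m hm
        rwa [iota_nonneg_apply _ hm0] at h1
      · have hm0 : ¬ (-i) < 0 := by omega
        rw [iota_nonneg_apply _ hm0]
        have h1 := hcoef
        rwa [iota_nonneg_apply _ hm0] at h1
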